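/- arXiv:hep-th/0006006 — 3 statements merged into one kernel-verified Lean document; each statement's English description precedes it below -/
import Mathlib

section
/- For n ≥ 3, the group SO(2, ℤ/2ⁿℤ) = { [[a,b],[−b,a]] : a² + b² = 1 in ℤ/2ⁿℤ } has exactly 2ⁿ⁺¹ elements. -/
open Finset

private lemma neZero_pow2 (k : ℕ) : NeZero (2^k) := ⟨pow_ne_zero _ two_ne_zero⟩

private lemma cast_down {n : ℕ} (x : ZMod (2^(n+1))) :
    ZMod.castHom (pow_dvd_pow 2 n.le_succ) (ZMod (2^n)) x = ((x.val : ℕ) : ZMod (2^n)) := by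
  haveI := neZero_pow2 (n+1)
  conv_lhs => rw [← ZMod.natCast_rightInverse x]
  rw [map_natCast]

private lemma ker_char {n : ℕ} (z : ZMod (2^(n+1)))
    (hz : ZMod.castHom (pow_dvd_pow 2 n.le_succ) (ZMod (2^n)) z = 0) :
    z = 0 ∨ z = ((2^n : ℕ) : ZMod (2^(n+1))) := by
  haveI := neZero_pow2 (n+1)
  rw [cast_down, ZMod.natCast_eq_zero_iff] at hz
  have hlt : z.val < 2^(n+1) := ZMod.val_lt z
  obtain ⟨c, hc⟩ := hz
  have hc2 : c < 2 := by
    by_contra h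
    push_neg at h
    have : 2^n * 2 ≤ 2^n * c := Nat.mul_le_mul_left _ h
    rw [← pow_succ] at this
    omega
  interval_cases c
  · left; rw [← ZMod.natCast_rightInverse z, hc]; simp
  · right; rw [← ZMod.natCast_rightInverse z, hc]; simp

private def L {n : ℕ} (x : ZMod (2^n)) : ZMod (2^(n+1)) := ((x.val : ℕ) : ZMod (2^(n+1)))

private lemma cast_L {n : ℕ} (x : ZMod (2^n)) :
    ZMod.castHom (pow_dvd_pow 2 n.le_succ) (ZMod (2^n)) (L x) = x := by
  haveI := neZero_pow2 n
  rw [L, map_natCast, ZMod.natCast_rightInverse]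

private lemma two_E (n : ℕ) : (2 : ZMod (2^(n+1))) * ((2^n : ℕ) : ZMod (2^(n+1))) = 0 := by
  have h : ((2^(n+1) : ℕ) : ZMod (2^(n+1))) = 0 := ZMod.natCast_self _
  push_cast at h ⊢
  linear_combination h

private lemma E_sq {n : ℕ} (hn : 1 ≤ n) : (((2^n : ℕ) : ZMod (2^(n+1))))^2 = 0 := by
  obtain ⟨m, rfl⟩ : ∃ m, n = m + 1 := ⟨n-1, by omega⟩
  have h : ((2^(m+1+1) : ℕ) : ZMod (2^(m+1+1))) = 0 := ZMod.natCast_self _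
  push_cast at h ⊢
  linear_combination (2^m : ZMod (2^(m+1+1))) * h

private lemma fiber_char {n : ℕ} {x : ZMod (2^n)} {y : ZMod (2^(n+1))}
    (hy : ZMod.castHom (pow_dvd_pow 2 n.le_succ) (ZMod (2^n)) y = x) :
    y = L x ∨ y = L x + ((2^n : ℕ) : ZMod (2^(n+1))) := by
  have h0 : ZMod.castHom (pow_dvd_pow 2 n.le_succ) (ZMod (2^n)) (y - L x) = 0 := by
    rw [map_sub, hy, cast_L, sub_self]
  rcases ker_char _ h0 with h | h
  · left; rw [sub_eq_zero] at h; exact h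
  · right; rwa [sub_eq_iff_eq_add'] at h

private lemma sq_eq_of_cast_eq {n : ℕ} (hn : 1 ≤ n) {x : ZMod (2^n)} {y : ZMod (2^(n+1))}
    (hy : ZMod.castHom (pow_dvd_pow 2 n.le_succ) (ZMod (2^n)) y = x) :
    y^2 = (L x)^2 := by
  rcases fiber_char hy with h | h
  · rw [h]
  · rw [h]; linear_combination (L x) * two_E n + E_sq hn

private lemma val_parity_sol {n : ℕ} (hn : 1 ≤ n) {q : ZMod (2^n) × ZMod (2^n)}
    (hsol : q.1^2 + q.2^2 = 1) (h1 : ¬ q.1.val % 2 = 1) : q.2.val % 2 = 1 := by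
  haveI := neZero_pow2 n
  have hd : (2:ℕ) ∣ 2^n := dvd_pow_self 2 (by omega)
  have key : ∀ x : ZMod (2^n), x.val % 2 = ((ZMod.castHom hd (ZMod 2)) x).val := by
    intro x
    conv_rhs => rw [← ZMod.natCast_rightInverse x]
    rw [map_natCast, ZMod.val_natCast]
  have happ := congrArg (ZMod.castHom hd (ZMod 2)) hsol
  rw [map_add, map_pow, map_pow, map_one] at happ
  rw [key] at h1 ⊢
  revert happ h1
  generalize (ZMod.castHom hd (ZMod 2)) q.1 = a
  generalize (ZMod.castHom hd (ZMod 2)) q.2 = b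
  revert a b; decide

private lemma val_parity_add {n : ℕ} (hn : 2 ≤ n) (x : ZMod (2^n)) :
    (x + ((2^(n-1) : ℕ) : ZMod (2^n))).val % 2 = x.val % 2 := by
  haveI := neZero_pow2 n
  rw [ZMod.val_add, ZMod.val_natCast]
  have h1 : 2^(n-1) % 2^n = 2^(n-1) := Nat.mod_eq_of_lt (Nat.pow_lt_pow_right one_lt_two (by omega))
  rw [h1, Nat.mod_mod_of_dvd _ (dvd_pow_self 2 (by omega : n ≠ 0))]
  obtain ⟨j, hj⟩ : (2:ℕ) ∣ 2^(n-1) := dvd_pow_self 2 (by omega)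
  omega

private lemma c_add_c {n : ℕ} (hn : 1 ≤ n) :
    ((2^(n-1) : ℕ) : ZMod (2^n)) + ((2^(n-1) : ℕ) : ZMod (2^n)) = 0 := by
  rw [← Nat.cast_add, show 2^(n-1) + 2^(n-1) = 2^n by
    rw [← two_mul, ← pow_succ']; congr 1; omega]
  exact ZMod.natCast_self _

private lemma sq_add_c {n : ℕ} (hn : 2 ≤ n) (x : ZMod (2^n)) :
    (x + ((2^(n-1) : ℕ) : ZMod (2^n)))^2 = x^2 := by
  obtain ⟨m, rfl⟩ : ∃ m, n = m + 2 := ⟨n-2, by omega⟩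
  show (x + ((2^(m+1) : ℕ) : ZMod (2^(m+2))))^2 = x^2
  have h2c : (2 : ZMod (2^(m+2))) * ((2^(m+1) : ℕ)) = 0 := by
    have h : ((2^(m+2) : ℕ) : ZMod (2^(m+2))) = 0 := ZMod.natCast_self _
    push_cast at h ⊢; linear_combination h
  have hc2 : (((2^(m+1) : ℕ)) : ZMod (2^(m+2)))^2 = 0 := by
    have h : ((2^(m+2) : ℕ) : ZMod (2^(m+2))) = 0 := ZMod.natCast_self _
    push_cast at h ⊢; linear_combination (2^m : ZMod (2^(m+2))) * h
  linear_combination x * h2c + hc2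

private lemma L_sq_toggle {n : ℕ} (hn : 3 ≤ n) {x : ZMod (2^n)} (hx : x.val % 2 = 1) :
    (L (x + ((2^(n-1) : ℕ) : ZMod (2^n))))^2 = (L x)^2 + ((2^n : ℕ) : ZMod (2^(n+1))) := by
  haveI := neZero_pow2 n
  obtain ⟨m, rfl⟩ : ∃ m, n = m + 3 := ⟨n-3, by omega⟩
  set R := ZMod (2^(m+3+1))
  set E : R := ((2^(m+3) : ℕ) : R) with hE
  set c' : R := ((2^(m+3-1) : ℕ) : R) with hc'
  have hzero : ((2^(m+3+1) : ℕ) : R) = 0 := ZMod.natCast_self _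
  have h2E : (2:R) * E = 0 := by rw [hE]; push_cast at hzero ⊢; linear_combination hzero
  have hE2 : E^2 = 0 := by rw [hE]; push_cast at hzero ⊢; linear_combination (2^(m+2) : R) * hzero
  have h2c : (2:R) * c' = E := by rw [hE, hc']; push_cast; ring
  have hc'2 : c'^2 = 0 := by rw [hc']; push_cast at hzero ⊢; linear_combination (2^m : R) * hzero
  have hLxE : (L x) * E = E := by
    obtain ⟨k, hk⟩ : ∃ k, x.val = 2*k+1 := ⟨x.val/2, by omega⟩
    rw [L, hk]
    push_cast
    linear_combination ((k : R)) * h2E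
  have hcast : ZMod.castHom (pow_dvd_pow 2 (m+3).le_succ) (ZMod (2^(m+3)))
      ((L x) + c') = x + ((2^(m+3-1) : ℕ) : ZMod (2^(m+3))) := by
    rw [map_add, cast_L, hc', map_natCast]
  rcases fiber_char hcast with h | h
  · rw [show (2:ℕ)^(m+3-1) = 2^(m+3-1) from rfl] at h
    rw [← h]
    linear_combination (L x) * h2c + hLxE + hc'2
  · have he : L (x + ((2^(m+3-1) : ℕ) : ZMod (2^(m+3)))) = L x + c' - E := by
      linear_combination -h
    rw [he]
    linear_combination (L x) * h2c + hLxE + hc'2 + hE2 - (L x) * h2E - c' * h2E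

private def Sval {n : ℕ} (q : ZMod (2^n) × ZMod (2^n)) : ZMod (2^(n+1)) :=
  (L q.1)^2 + (L q.2)^2

private lemma Sval_eq {n : ℕ} (hn : 1 ≤ n) (q : ZMod (2^n) × ZMod (2^n))
    (p : ZMod (2^(n+1)) × ZMod (2^(n+1)))
    (h1 : ZMod.castHom (pow_dvd_pow 2 n.le_succ) (ZMod (2^n)) p.1 = q.1)
    (h2 : ZMod.castHom (pow_dvd_pow 2 n.le_succ) (ZMod (2^n)) p.2 = q.2) :
    p.1^2 + p.2^2 = Sval q := by
  rw [Sval, sq_eq_of_cast_eq hn h1, sq_eq_of_cast_eq hn h2]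

private lemma cast_Sval {n : ℕ} (q : ZMod (2^n) × ZMod (2^n)) :
    ZMod.castHom (pow_dvd_pow 2 n.le_succ) (ZMod (2^n)) (Sval q) = q.1^2 + q.2^2 := by
  rw [Sval, map_add, map_pow, map_pow, cast_L, cast_L]

private lemma L_one {n : ℕ} (hn : 1 ≤ n) : L (1 : ZMod (2^n)) = 1 := by
  haveI : Fact (1 < 2^n) := ⟨Nat.one_lt_two_pow (by omega)⟩
  rw [L, ZMod.val_one, Nat.cast_one]

private lemma Sval_cases {n : ℕ} (hn : 1 ≤ n) {q : ZMod (2^n) × ZMod (2^n)}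
    (hq : q.1^2 + q.2^2 = 1) :
    Sval q = 1 ∨ Sval q = 1 + ((2^n : ℕ) : ZMod (2^(n+1))) := by
  have hcast : ZMod.castHom (pow_dvd_pow 2 n.le_succ) (ZMod (2^n)) (Sval q) = 1 := by
    rw [cast_Sval, hq]
  rcases fiber_char hcast with h | h
  · left; rw [h, L_one hn]
  · right; rw [h, L_one hn]

private lemma E_ne_zero (n : ℕ) : ((2^n : ℕ) : ZMod (2^(n+1))) ≠ 0 := by
  rw [Ne, ZMod.natCast_eq_zero_iff]
  intro h
  have h1 := Nat.le_of_dvd (Nat.pow_pos (by norm_num : 0 < 2)) h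
  have h2 : (2:ℕ)^n < 2^(n+1) := Nat.pow_lt_pow_right one_lt_two (Nat.lt_succ_self n)
  omega

private lemma key_count (n : ℕ) (hn : 3 ≤ n) :
    (Finset.univ.filter (fun p : ZMod (2^n) × ZMod (2^n) => p.1^2 + p.2^2 = 1)).card
      = 2^(n+1) := by
  induction n, hn using Nat.le_induction with
  | base => decide
  | succ n hn ih =>
    classical
    set t := Finset.univ.filter (fun q : ZMod (2^n) × ZMod (2^n) => q.1^2 + q.2^2 = 1) with ht
    set s := Finset.univ.filter
      (fun p : ZMod (2^(n+1)) × ZMod (2^(n+1)) => p.1^2 + p.2^2 = 1) with hs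
    set E : ZMod (2^(n+1)) := ((2^n : ℕ) : ZMod (2^(n+1))) with hE
    have hEne : E ≠ 0 := E_ne_zero n
    have hEE : E + E = 0 := by
      have := two_E n; rw [← hE] at this; linear_combination this
    set π := ZMod.castHom (pow_dvd_pow 2 n.le_succ) (ZMod (2^n)) with hπ
    have hπE : π E = 0 := by rw [hE, map_natCast, ZMod.natCast_self]
    set g : ZMod (2^(n+1)) × ZMod (2^(n+1)) → ZMod (2^n) × ZMod (2^n) :=
      fun p => (π p.1, π p.2) with hg
    have hmem : ∀ p ∈ s, g p ∈ t := by
      intro p hp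
      rw [hs, Finset.mem_filter] at hp
      rw [ht, Finset.mem_filter]
      refine ⟨Finset.mem_univ _, ?_⟩
      show (π p.1)^2 + (π p.2)^2 = 1
      rw [← map_pow, ← map_pow, ← map_add, hp.2, map_one]
    rw [Finset.card_eq_sum_card_fiberwise hmem]
    have hfib : ∀ q ∈ t, (s.filter fun p => g p = q).card = if Sval q = 1 then 4 else 0 := by
      intro q hq
      rw [ht, Finset.mem_filter] at hq
      by_cases hok : Sval q = 1
      · rw [if_pos hok]
        have hset : s.filter (fun p => g p = q)
            = (({L q.1, L q.1 + E} : Finset (ZMod (2^(n+1)))) ×ˢ ({L q.2, L q.2 + E} : Finset (ZMod (2^(n+1))))) := by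
          ext p
          rw [Finset.mem_filter, hs, Finset.mem_filter, Finset.mem_product,
            Finset.mem_insert, Finset.mem_insert, Finset.mem_singleton, Finset.mem_singleton]
          constructor
          · rintro ⟨⟨-, hpsol⟩, hgp⟩
            have h1 : π p.1 = q.1 := congrArg Prod.fst hgp
            have h2 : π p.2 = q.2 := congrArg Prod.snd hgp
            exact ⟨fiber_char h1, fiber_char h2⟩
          · rintro ⟨h1, h2⟩
            have hc1 : π p.1 = q.1 := by
              rcases h1 with h | h <;> rw [h]
              · exact cast_L q.1
              · rw [map_add, cast_L, hπE, add_zero]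
            have hc2 : π p.2 = q.2 := by
              rcases h2 with h | h <;> rw [h]
              · exact cast_L q.2
              · rw [map_add, cast_L, hπE, add_zero]
            refine ⟨⟨Finset.mem_univ _, ?_⟩, Prod.ext hc1 hc2⟩
            show p.1^2 + p.2^2 = 1
            rw [Sval_eq (by omega) q p hc1 hc2, hok]
        rw [hset, Finset.card_product]
        have hcs : ∀ x : ZMod (2^(n+1)), ({x} : Finset (ZMod (2^(n+1)))).card = 1 :=
          fun x => Finset.card_singleton x
        have hne1 : L q.1 ∉ ({L q.1 + E} : Finset _) := by
          rw [Finset.mem_singleton]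
          intro h
          exact hEne (by linear_combination -h)
        have hne2 : L q.2 ∉ ({L q.2 + E} : Finset _) := by
          rw [Finset.mem_singleton]
          intro h
          exact hEne (by linear_combination -h)
        rw [Finset.card_insert_of_notMem hne1, Finset.card_insert_of_notMem hne2, hcs, hcs]
      · rw [if_neg hok]
        rw [Finset.card_eq_zero, Finset.filter_eq_empty_iff]
        intro p hp
        rw [hs, Finset.mem_filter] at hp
        intro hgp
        have h1 : π p.1 = q.1 := congrArg Prod.fst hgp
        have h2 : π p.2 = q.2 := congrArg Prod.snd hgp
        exact hok (by rw [← Sval_eq (by omega) q p h1 h2, hp.2])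
    rw [Finset.sum_congr rfl hfib, Finset.sum_ite, Finset.sum_const, Finset.sum_const_zero,
      add_zero, smul_eq_mul]
    -- now: (t.filter fun q => Sval q = 1).card * 4 = 2^(n+1+1)
    set c : ZMod (2^n) := ((2^(n-1) : ℕ) : ZMod (2^n)) with hc
    set ι : ZMod (2^n) × ZMod (2^n) → ZMod (2^n) × ZMod (2^n) :=
      fun q => if q.1.val % 2 = 1 then (q.1 + c, q.2) else (q.1, q.2 + c) with hι
    have hι_sol : ∀ q ∈ t, ι q ∈ t := by
      intro q hq
      rw [ht, Finset.mem_filter] at hq ⊢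
      refine ⟨Finset.mem_univ _, ?_⟩
      rw [hι]
      by_cases h1 : q.1.val % 2 = 1
      · simp only [if_pos h1]
        show (q.1 + c)^2 + q.2^2 = 1
        rw [hc, sq_add_c (by omega)]; exact hq.2
      · simp only [if_neg h1]
        show q.1^2 + (q.2 + c)^2 = 1
        rw [hc, sq_add_c (by omega)]; exact hq.2
    have hι_toggle : ∀ q ∈ t, Sval (ι q) = Sval q + E := by
      intro q hq
      rw [ht, Finset.mem_filter] at hq
      rw [hι]
      by_cases h1 : q.1.val % 2 = 1
      · simp only [if_pos h1]
        show (L (q.1 + c))^2 + (L q.2)^2 = Sval q + E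
        rw [hc, L_sq_toggle hn h1, Sval, hE]; ring
      · have h2 := val_parity_sol (by omega) hq.2 h1
        simp only [if_neg h1]
        show (L q.1)^2 + (L (q.2 + c))^2 = Sval q + E
        rw [hc, L_sq_toggle hn h2, Sval, hE]; ring
    have hιι : ∀ q : ZMod (2^n) × ZMod (2^n), ι (ι q) = q := by
      intro q
      by_cases h1 : q.1.val % 2 = 1
      · have hp : ((q.1 + c, q.2) : ZMod (2^n) × ZMod (2^n)).1.val % 2 = 1 :=
          (val_parity_add (by omega) q.1).trans h1
        simp only [hι, if_pos h1, if_pos hp]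
        show (q.1 + c + c, q.2) = q
        rw [add_assoc, hc, c_add_c (by omega), add_zero]
      · have hp : ¬ ((q.1, q.2 + c) : ZMod (2^n) × ZMod (2^n)).1.val % 2 = 1 := h1
        simp only [hι, if_neg h1, if_neg hp]
        show (q.1, q.2 + c + c) = q
        rw [add_assoc, hc, c_add_c (by omega), add_zero]
    have hbij : (t.filter fun q => Sval q = 1).card
        = (t.filter fun q => ¬ Sval q = 1).card := by
      apply Finset.card_nbij' ι ι
      · intro q hq
        rw [Finset.mem_coe, Finset.mem_filter] at hq ⊢
        refine ⟨hι_sol q hq.1, ?_⟩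
        rw [hι_toggle q hq.1, hq.2]
        intro h
        exact hEne (by linear_combination h)
      · intro q hq
        rw [Finset.mem_coe, Finset.mem_filter] at hq ⊢
        refine ⟨hι_sol q hq.1, ?_⟩
        have hqt := hq.1
        rw [ht, Finset.mem_filter] at hqt
        rcases Sval_cases (by omega) hqt.2 with h | h
        · exact absurd h hq.2
        · rw [hι_toggle q hq.1, h, ← hE, add_assoc, hEE, add_zero]
      · intro q _; exact hιι q
      · intro q _; exact hιι q
    have hsplit : (t.filter fun q => Sval q = 1).card
        + (t.filter fun q => ¬ Sval q = 1).card = t.card :=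
      Finset.card_filter_add_card_filter_not _
    rw [ih] at hsplit
    have hpow : (2:ℕ)^(n+1) = 2 * 2^n := by ring
    have hcard : (t.filter fun q => Sval q = 1).card = 2^n := by omega
    rw [hcard]
    ring

theorem card_so2_mod_two_pow (n : ℕ) (hn : 3 ≤ n) :
    Set.ncard {A : Matrix (Fin 2) (Fin 2) (ZMod (2^n)) |
      ∃ a b : ZMod (2^n), a^2 + b^2 = 1 ∧ A = !![a, b; -b, a]} = 2^(n+1) := by
  classical
  haveI := neZero_pow2 n
  have hinj : Function.Injective
      (fun p : ZMod (2^n) × ZMod (2^n) => !![p.1, p.2; -p.2, p.1]) := by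
    intro p q h
    have h00 := congrFun (congrFun h 0) 0
    have h01 := congrFun (congrFun h 0) 1
    simp only [Matrix.cons_val', Matrix.cons_val_zero, Matrix.empty_val',
      Matrix.cons_val_fin_one, Matrix.cons_val_one, Matrix.head_cons,
      Matrix.head_fin_const] at h00 h01
    exact Prod.ext h00 h01
  have hset : {A : Matrix (Fin 2) (Fin 2) (ZMod (2^n)) |
      ∃ a b : ZMod (2^n), a^2 + b^2 = 1 ∧ A = !![a, b; -b, a]}
      = ↑((Finset.univ.filter
          (fun p : ZMod (2^n) × ZMod (2^n) => p.1^2 + p.2^2 = 1)).image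
          (fun p => !![p.1, p.2; -p.2, p.1])) := by
    ext A
    simp only [Finset.coe_image, Set.mem_image, Finset.mem_coe, Finset.mem_filter,
      Finset.mem_univ, true_and, Set.mem_setOf_eq]
    constructor
    · rintro ⟨a, b, h, rfl⟩; exact ⟨(a, b), h, rfl⟩
    · rintro ⟨⟨a, b⟩, h, rfl⟩; exact ⟨a, b, h, rfl⟩
  rw [hset, Set.ncard_coe_finset, Finset.card_image_of_injective _ hinj, key_count n hn]
end

section
/- For n ≥ 3 and any matrix A ∈ SO(2, ℤ/2ⁿℤ), one has A^(2ⁿ⁻¹) = I, i.e., A raised to the power N/2 with N = 2ⁿ equals the identity matrix. -/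
lemma rot_sq {R : Type*} [CommRing R] (c d : R) :
    (!![c,d;-d,c]) ^ 2 = !![c*c-d*d, 2*(c*d); -(2*(c*d)), c*c-d*d] := by
  rw [pow_two]
  ext i j; fin_cases i <;> fin_cases j <;> simp [Matrix.mul_apply, Fin.sum_univ_two] <;> ring

lemma rot_aux (n : ℕ) (hn : 1 ≤ n) :
    ∀ m : ℕ, 1 ≤ m → ∀ c d : ZMod (2^n), c^2 + d^2 = 1 →
      (∃ e, d = 2^(n-m) * e) → (!![c,d;-d,c]) ^ (2^m) = 1 := by
  intro m hm
  induction m, hm using Nat.le_induction with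
  | base =>
    intro c d h ⟨e, he⟩
    have h2 : ((2:ZMod (2^n)))^n = 0 := by
      have : ((2^n : ℕ) : ZMod (2^n)) = 0 := ZMod.natCast_self _
      push_cast at this
      exact this
    have h2d : 2 * d = 0 := by
      rw [he, show (2:ZMod (2^n)) * (2^(n-1)*e) = 2^((n-1)+1) * e by ring,
        show (n-1)+1 = n by omega, h2]
      ring
    rw [show (2:ℕ)^1 = 2 from rfl, rot_sq]
    have e1 : c*c - d*d = 1 := by linear_combination h - d * h2d
    have e2 : 2*(c*d) = 0 := by linear_combination c * h2d
    rw [e1, e2, Matrix.one_fin_two]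
    norm_num
  | succ m hm ih =>
    intro c d h ⟨e, he⟩
    rw [show (2:ℕ)^(m+1) = 2 * 2^m by ring, pow_mul, rot_sq]
    apply ih
    · ring_nf; linear_combination (c^2+d^2+1) * h
    · obtain ⟨k, hk⟩ : ∃ k, n - (m+1) + 1 = (n - m) + k := ⟨(n - (m+1) + 1) - (n-m), by omega⟩
      exact ⟨2^k * (c * e), by
        rw [he, show (2:ZMod (2^n))*(c*(2^(n-(m+1))*e)) = 2^(n-(m+1)+1)*(c*e) by ring, hk, pow_add]
        ring⟩

theorem so2_element_pow_half_period (n : ℕ) (hn : 3 ≤ n)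
    (a b : ZMod (2^n)) (h : a^2 + b^2 = 1) :
    (!![a, b; -b, a])^(2^(n-1)) = 1 := by
  haveI : NeZero (2^n) := ⟨by positivity⟩
  have h4dvd : (4:ℕ) ∣ 2^n := by
    have : (4:ℕ) = 2^2 := by norm_num
    rw [this]; exact pow_dvd_pow 2 (by omega)
  set f := ZMod.castHom h4dvd (ZMod 4) with hf
  have h44 : (4 : ZMod 4) = 0 := by decide
  have hfa : f a ^ 2 + f b ^ 2 = 1 := by
    have := congrArg f h
    simpa using this
  have ha : ((a.val : ℕ) : ZMod (2^n)) = a := ZMod.natCast_rightInverse a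
  have hb : ((b.val : ℕ) : ZMod (2^n)) = b := ZMod.natCast_rightInverse b
  rcases Nat.even_or_odd a.val with ⟨k, hk⟩ | ⟨k, hk⟩ <;>
    rcases Nat.even_or_odd b.val with ⟨j, hj⟩ | ⟨j, hj⟩
  · -- both even: contradiction
    exfalso
    rw [← ha, ← hb, hk, hj] at hfa
    simp only [map_natCast] at hfa
    push_cast at hfa
    have : (0 : ZMod 4) = 1 := by
      linear_combination hfa - ((k:ZMod 4)^2 + (j:ZMod 4)^2)*h44
    exact absurd this (by decide)
  · -- a even, b odd
    have haa : a = 2 * (k : ZMod (2^n)) := by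
      rw [← ha, hk]; push_cast; ring
    rw [show 2^(n-1) = 2 * 2^(n-2) by
        rw [← pow_succ']; congr 1; omega, pow_mul, rot_sq]
    apply rot_aux n (by omega) (n-2) (by omega)
    · linear_combination (a^2+b^2+1)*h
    · refine ⟨(k : ZMod (2^n)) * b, ?_⟩
      rw [show n - (n-2) = 2 by omega, haa]; ring
  · -- a odd, b even
    apply rot_aux n (by omega) (n-1) (by omega) a b h
    refine ⟨(j : ZMod (2^n)), ?_⟩
    rw [show n - (n-1) = 1 by omega, ← hb, hj]; push_cast; ring
  · -- both odd: contradiction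
    exfalso
    rw [← ha, ← hb, hk, hj] at hfa
    simp only [map_natCast] at hfa
    push_cast at hfa
    have : (2 : ZMod 4) = 1 := by
      linear_combination hfa - ((k:ZMod 4)^2 + (k:ZMod 4) + (j:ZMod 4)^2 + (j:ZMod 4))*h44
    exact absurd this (by decide)
end

section
/- Let T_l denote the Chebyshev polynomial of the first kind of degree l. For n ≥ 3 and any even integer a, T_{2ⁿ⁻¹}(a) ≡ 1 (mod 2ⁿ). -/
open Polynomial Polynomial.Chebyshev

lemma cheb_double (x : ℤ) (m : ℤ) :
    (T ℤ (2 * m)).eval x = 2 * ((T ℤ m).eval x)^2 - 1 := by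
  rw [T_mul, eval_comp, T_two]
  simp [eval_mul, eval_pow, eval_sub]

lemma key (a : ℤ) (ha : Even a) : ∀ k : ℕ, 2 ≤ k →
    (T ℤ (2^k)).eval a ≡ 1 [ZMOD 2^(k+1)] := by
  intro k
  induction k with
  | zero => omega
  | succ k ih =>
    intro hk
    rcases Nat.lt_or_ge k 2 with h | h
    · interval_cases k
      · omega
      · obtain ⟨c, hc⟩ := ha
        have heval : (T ℤ (2^(1+1))).eval a = 2 * (2 * a^2 - 1)^2 - 1 := by
          rw [show ((2:ℤ)^(1+1)) = 2 * (2 * 1) by norm_num, cheb_double, cheb_double]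
          simp [T_one]
        rw [heval]
        have hdvd : (2:ℤ)^(1+1+1) ∣ (2 * (2 * a^2 - 1)^2 - 1) - 1 := by
          subst hc
          exact ⟨16*c^4 - 4*c^2, by ring⟩
        exact (Int.ModEq.symm (Int.modEq_iff_dvd.mpr hdvd))
    · have hb := ih h
      have hpow : ((2:ℤ))^(k+1) = 2 * 2^k := by ring
      have heval : (T ℤ (2^(k+1))).eval a = 2 * ((T ℤ (2^k)).eval a)^2 - 1 := by
        rw [hpow, cheb_double]
      rw [heval]
      set b := (T ℤ (2^k)).eval a with hbdef
      have hdvd : ((2:ℤ)^(k+1)) ∣ b - 1 := Int.modEq_iff_dvd.mp hb.symm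
      obtain ⟨t, ht⟩ := hdvd
      have hbt : b = 1 + 2^(k+1) * t := by linarith
      rw [hbt]
      have hdvd2 : ((2:ℤ)^(k+1+1)) ∣ (2 * (1 + 2^(k+1)*t)^2 - 1) - 1 :=
        ⟨2*t + 2^(k+1)*t^2, by ring⟩
      exact (Int.ModEq.symm (Int.modEq_iff_dvd.mpr hdvd2))

theorem chebyshev_at_even_arg (n : ℕ) (hn : 3 ≤ n) (a : ℤ) (ha : Even a) :
    (Polynomial.Chebyshev.T ℤ (2^(n-1))).eval a ≡ 1 [ZMOD 2^n] := by
  have h := key a ha (n-1) (by omega)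
  have : n - 1 + 1 = n := by omega
  rwa [this] at h
end
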